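/- arXiv:2411.06579 — 3 statements merged into one kernel-verified Lean document; each statement's English description precedes it below -/
import Mathlib

section
/- Let 𝕂 be ℝ or ℂ and let Ω ⊂ 𝕂^d be a bounded convex domain with 0 ∈ Ω. For each unit vector x in the Euclidean unit sphere S of 𝕂^d ≅ ℝ^{(dim_ℝ𝕂)d}, let w(x) > 0 be the unique positive number with w(x)x ∈ ∂Ω. If σ : [a,b] → S is absolutely continuous and ξ(t) := w(σ(t))σ(t), then ξ is absolutely continuous and (ξ(t) + ℝ·ξ'(t)) ∩ Ω = ∅ for almost every t ∈ [a,b]. -/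
open Set Metric MeasureTheory
open scoped ENNReal

noncomputable section

/-- `σ` is absolutely continuous on `[a,b]`: it is the integral of an integrable density. -/
def ACOn {E : Type*} [NormedAddCommGroup E] [NormedSpace ℝ E] (σ : ℝ → E) (a b : ℝ) : Prop :=
  ∃ g : ℝ → E, IntervalIntegrable g volume a b ∧
    ∀ t ∈ Set.Icc a b, σ t = σ a + ∫ s in a..t, g s

variable (𝕜 : Type*) [RCLike 𝕜] {d : ℕ}

/-- The distance `δ_Ω^{(k)}(p; v)` from `p` to the boundary of `Ω`, measured as the supremum over
all `k`-dimensional `𝕜`-linear subspaces `V` containing `v` of the distance from `p` to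
`(p + V) ∩ ∂Ω` (with value `∞` when some such affine plane misses the boundary). -/
noncomputable def qhDelta (Ω : Set (EuclideanSpace 𝕜 (Fin d))) (k : ℕ)
    (p v : EuclideanSpace 𝕜 (Fin d)) : ℝ≥0∞ :=
  ⨆ (V : Submodule 𝕜 (EuclideanSpace 𝕜 (Fin d))) (_ : v ∈ V) (_ : Module.finrank 𝕜 V = k),
    EMetric.infEdist p ({q | ∃ w ∈ V, q = p + w} ∩ frontier Ω)

/-- The generalized `k`-quasi-hyperbolic metric `𝔮_Ω^{(k)}(p;v) = ‖v‖ / δ_Ω^{(k)}(p;v)`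
(interpreted as `0` when `δ_Ω^{(k)}(p;v) = ∞`). -/
noncomputable def qhNorm (Ω : Set (EuclideanSpace 𝕜 (Fin d))) (k : ℕ)
    (p v : EuclideanSpace 𝕜 (Fin d)) : ℝ :=
  ‖v‖ / (qhDelta 𝕜 Ω k p v).toReal

/-- The generalized `k`-quasi-hyperbolic distance: the infimum of `∫ 𝔮_Ω^{(k)}(σ; σ')` over
absolutely continuous curves in `Ω` joining the two points. -/
noncomputable def qhDist (Ω : Set (EuclideanSpace 𝕜 (Fin d))) (k : ℕ)
    (p q : EuclideanSpace 𝕜 (Fin d)) : ℝ :=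
  sInf {L : ℝ | ∃ (a b : ℝ) (σ : ℝ → EuclideanSpace 𝕜 (Fin d)), a ≤ b ∧ ACOn σ a b ∧
    (∀ t ∈ Set.Icc a b, σ t ∈ Ω) ∧ σ a = p ∧ σ b = q ∧
    L = ∫ t in a..b, qhNorm 𝕜 Ω k (σ t) (deriv σ t)}

/-- A (unit speed) geodesic segment for a distance function. -/
def IsGeodesicOn {X : Type*} (dist : X → X → ℝ) (γ : ℝ → X) (a b : ℝ) : Prop :=
  ∀ s ∈ Set.Icc a b, ∀ t ∈ Set.Icc a b, dist (γ s) (γ t) = |s - t|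

/-- Gromov hyperbolicity of a distance function, via `δ`-slim geodesic triangles. -/
def GromovHyperbolicDist {X : Type*} (dist : X → X → ℝ) : Prop :=
  ∃ δ : ℝ, 0 ≤ δ ∧
    ∀ (γ₁ γ₂ γ₃ : ℝ → X) (a₁ b₁ a₂ b₂ a₃ b₃ : ℝ),
      IsGeodesicOn dist γ₁ a₁ b₁ → IsGeodesicOn dist γ₂ a₂ b₂ → IsGeodesicOn dist γ₃ a₃ b₃ →
      γ₁ b₁ = γ₂ a₂ → γ₂ b₂ = γ₃ a₃ → γ₃ b₃ = γ₁ a₁ →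
      ∀ s ∈ Set.Icc a₁ b₁, ∃ t, (t ∈ Set.Icc a₂ b₂ ∧ dist (γ₁ s) (γ₂ t) ≤ δ) ∨
        (t ∈ Set.Icc a₃ b₃ ∧ dist (γ₁ s) (γ₃ t) ≤ δ)

/-- `n` is an `(r,δ)`-quasi-normal vector at `x ∈ ∂Ω`: `n` is a unit vector and
`dist(x + rn, ∂Ω) ≥ δ`. -/
def IsQuasiNormal (Ω : Set (EuclideanSpace 𝕜 (Fin d))) (r δ : ℝ)
    (x n : EuclideanSpace 𝕜 (Fin d)) : Prop :=
  ‖n‖ = 1 ∧ δ ≤ Metric.infDist (x + r • n) (frontier Ω)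

/-- `δ_Ω(p;v)`: the distance from `p` to the boundary along the `𝕜`-line through `p` in
direction `v`. -/
noncomputable def lineBdryDist (Ω : Set (EuclideanSpace 𝕜 (Fin d)))
    (p v : EuclideanSpace 𝕜 (Fin d)) : ℝ :=
  Metric.infDist p ({q | ∃ c : 𝕜, q = p + c • v} ∩ frontier Ω)

/-!
On the sphere `w x = (gauge Ω x)⁻¹`, and since the gauge of `Ω` is Lipschitz and bounded below
there, the radial projection `x ↦ w x • x` is Lipschitz on the sphere. Hence `ξ` inherits
absolute continuity from `σ`; in finite dimensions an absolutely continuous curve is the integral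
of its derivative, computed coordinatewise by the real fundamental theorem of calculus.

For the second claim, take a functional `f` supporting `Ω` at `ξ t`, i.e. `f < f (ξ t)` on `Ω`.
As `ξ` stays in `∂Ω`, `f ∘ ξ` has a local maximum at `t`, so `f (ξ' t) = 0` and `f` is constant,
equal to `f (ξ t)`, on the whole tangent line, which therefore misses `Ω`.
-/

open Filter
open scoped Topology

namespace AbsolutelyContinuousOnInterval

theorem of_dist_le_mul {X Y : Type*} [PseudoMetricSpace X] [PseudoMetricSpace Y]
    {f : ℝ → X} {g : ℝ → Y} {a b K : ℝ} (hg : AbsolutelyContinuousOnInterval g a b)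
    (hfg : ∀ x ∈ uIcc a b, ∀ y ∈ uIcc a b, dist (f x) (f y) ≤ K * dist (g x) (g y)) :
    AbsolutelyContinuousOnInterval f a b := by
  have hKg := Tendsto.const_mul K hg
  rw [mul_zero] at hKg
  refine squeeze_zero' (Eventually.of_forall fun _ => Finset.sum_nonneg fun _ _ => dist_nonneg)
    ?_ hKg
  filter_upwards [mem_inf_of_right (mem_principal_self (disjWithin a b))] with E hE
  rw [Finset.mul_sum]
  exact Finset.sum_le_sum fun i hi => hfg _ (hE.1 i hi).1 _ (hE.1 i hi).2

end AbsolutelyContinuousOnInterval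

section AbsolutelyContinuous

variable {E : Type*} [NormedAddCommGroup E] [NormedSpace ℝ E] {f : ℝ → E} {a b : ℝ}

theorem ACOn.absolutelyContinuousOnInterval (hf : ACOn f a b) (hab : a ≤ b) :
    AbsolutelyContinuousOnInterval f a b := by
  obtain ⟨g, hg, hfg⟩ := hf
  have hG := hg.norm.absolutelyContinuousOnInterval_intervalIntegral (c := a) left_mem_uIcc
  refine hG.of_dist_le_mul (K := 1) fun x hx y hy => ?_
  rw [uIcc_of_le hab] at hx hy
  have hsub : ∀ {u v}, u ∈ Icc a b → v ∈ Icc a b → IntervalIntegrable g volume u v :=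
    fun hu hv => hg.mono_set (uIcc_subset_uIcc (Icc_subset_uIcc hu) (Icc_subset_uIcc hv))
  rw [one_mul, dist_eq_norm, Real.dist_eq, hfg x hx, hfg y hy, add_sub_add_left_eq_sub,
    intervalIntegral.integral_interval_sub_left (hsub (left_mem_Icc.2 hab) hx)
      (hsub (left_mem_Icc.2 hab) hy),
    intervalIntegral.integral_interval_sub_left (hsub (left_mem_Icc.2 hab) hx).norm
      (hsub (left_mem_Icc.2 hab) hy).norm]
  exact intervalIntegral.norm_integral_le_abs_integral_norm

theorem AbsolutelyContinuousOnInterval.acOn [FiniteDimensional ℝ E]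
    (hf : AbsolutelyContinuousOnInterval f a b) : ACOn f a b := by
  set B := Module.finBasis ℝ E
  set ℓ : Fin _ → E →L[ℝ] ℝ := fun i => LinearMap.toContinuousLinearMap (B.coord i)
  have hℓf : ∀ i, AbsolutelyContinuousOnInterval (fun t => ℓ i (f t)) a b := fun i =>
    hf.of_dist_le_mul fun x _ y _ => (ℓ i).lipschitz.dist_le_mul _ _
  have hint : ∀ {u}, uIcc a u ⊆ uIcc a b → ∀ i,
      IntervalIntegrable (fun t => deriv (fun s => ℓ i (f s)) t • B i) volume a u :=
    fun hu i => by
      have h := ((hℓf i).mono hu).intervalIntegrable_deriv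
      exact ⟨h.1.smul_const _, h.2.smul_const _⟩
  refine ⟨fun t => ∑ i, deriv (fun s => ℓ i (f s)) t • B i, ?_, fun t ht => ?_⟩
  · simpa only [Finset.sum_fn] using IntervalIntegrable.sum Finset.univ fun i _ => hint le_rfl i
  · have hsub : uIcc a t ⊆ uIcc a b := uIcc_subset_uIcc_left (Icc_subset_uIcc ht)
    simp only [intervalIntegral.integral_finsetSum fun i _ => hint hsub i,
      intervalIntegral.integral_smul_const, ((hℓf _).mono hsub).integral_deriv_eq_sub]
    simp only [ℓ, LinearMap.coe_toContinuousLinearMap', Module.Basis.coord_apply, sub_smul,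
      Finset.sum_sub_distrib, B.sum_repr, add_sub_cancel]

end AbsolutelyContinuous

section Gauge

variable {E : Type*} [NormedAddCommGroup E] [NormedSpace ℝ E] {s : Set E}

theorem eq_inv_gauge_of_smul_mem_frontier (hc : Convex ℝ s) (hs : s ∈ 𝓝 0) {r : ℝ} {x : E}
    (hr : 0 ≤ r) (hx : r • x ∈ frontier s) : r = (gauge s x)⁻¹ := by
  have h := (gauge_eq_one_iff_mem_frontier hc hs).2 hx
  rw [gauge_smul_of_nonneg hr, smul_eq_mul] at h
  exact eq_inv_of_mul_eq_one_left h

theorem Convex.exists_lipschitzOnWith_inv_gauge_smul_sphere (hc : Convex ℝ s) (hs : s ∈ 𝓝 0)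
    (hb : Bornology.IsBounded s) :
    ∃ K, LipschitzOnWith K (fun x => (gauge s x)⁻¹ • x) (sphere (0 : E) 1) := by
  obtain ⟨L, hL⟩ := hc.lipschitz_gauge hs
  obtain ⟨R, hR, hsR⟩ : ∃ R, 0 < R ∧ s ⊆ closedBall 0 R := by
    obtain ⟨R, hsR⟩ := hb.subset_closedBall 0
    exact ⟨max R 1, by positivity, hsR.trans (closedBall_subset_closedBall (le_max_left _ _))⟩
  have hinv : ∀ x ∈ sphere (0 : E) 1, 0 < gauge s x ∧ (gauge s x)⁻¹ ≤ R := fun x hx => by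
    have h := le_gauge_of_subset_closedBall (absorbent_nhds_zero hs) hR.le hsR (x := x)
    rw [mem_sphere_zero_iff_norm.1 hx, one_div] at h
    exact ⟨(inv_pos.2 hR).trans_le h, inv_le_of_inv_le₀ hR h⟩
  refine ⟨(R + R ^ 2 * L).toNNReal, LipschitzOnWith.of_dist_le_mul fun x hx y hy => ?_⟩
  obtain ⟨hgx, hRx⟩ := hinv x hx
  obtain ⟨hgy, hRy⟩ := hinv y hy
  have hdiff : |(gauge s x)⁻¹ - (gauge s y)⁻¹| ≤ R ^ 2 * (L * dist x y) := by
    rw [inv_sub_inv hgx.ne' hgy.ne', abs_div, abs_of_pos (mul_pos hgx hgy), div_eq_inv_mul,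
      mul_inv, abs_sub_comm, ← Real.dist_eq, sq]
    gcongr
    exact hL.dist_le_mul x y
  rw [Real.coe_toNNReal _ (by positivity), dist_eq_norm]
  calc ‖(gauge s x)⁻¹ • x - (gauge s y)⁻¹ • y‖
      = ‖(gauge s x)⁻¹ • (x - y) + ((gauge s x)⁻¹ - (gauge s y)⁻¹) • y‖ := by
        congr 1; module
    _ ≤ (gauge s x)⁻¹ * ‖x - y‖ + |(gauge s x)⁻¹ - (gauge s y)⁻¹| * ‖y‖ := by
        grw [norm_add_le, norm_smul, norm_smul, Real.norm_of_nonneg (inv_nonneg.2 hgx.le),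
          Real.norm_eq_abs]
    _ ≤ R * dist x y + R ^ 2 * (L * dist x y) * 1 := by
        rw [mem_sphere_zero_iff_norm.1 hy, ← dist_eq_norm]
        gcongr
    _ = (R + R ^ 2 * L) * dist x y := by ring

end Gauge

theorem Convex.add_smul_deriv_notMem_of_eventually_mem_frontier {E : Type*}
    [NormedAddCommGroup E] [NormedSpace ℝ E] {Ω : Set E} (hc : Convex ℝ Ω) (ho : IsOpen Ω)
    {ξ : ℝ → E} {t : ℝ} (hξ : ∀ᶠ s in 𝓝 t, ξ s ∈ frontier Ω) (ρ : ℝ) :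
    ξ t + ρ • deriv ξ t ∉ Ω := by
  have hnotMem := Set.disjoint_left.1 (disjoint_frontier_iff_isOpen.2 ho)
  obtain ⟨f, hf⟩ := geometric_hahn_banach_open_point hc ho (hnotMem hξ.self_of_nhds)
  have hmax : IsLocalMax (fun s => f (ξ s)) t := hξ.mono fun s hs =>
    le_on_closure (fun z hz => (hf z hz).le) f.continuous.continuousOn continuousOn_const
      (frontier_subset_closure hs)
  have hderiv : f (deriv ξ t) = 0 := by
    by_cases hd : DifferentiableAt ℝ ξ t
    · exact hmax.hasDerivAt_eq_zero (f.hasFDerivAt.comp_hasDerivAt t hd.hasDerivAt)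
    · rw [deriv_zero_of_not_differentiableAt hd, map_zero]
  intro hmem
  simpa [hderiv] using hf _ hmem

/-- Lemma 6.4: for an absolutely continuous curve `σ` in the unit sphere, the
radial projection `ξ(t) = w(σ(t)) σ(t)` to the boundary of a bounded convex domain `Ω ∋ 0` is
absolutely continuous, and for almost every `t` the line `ξ(t) + ℝ·ξ'(t)` misses `Ω`. -/
theorem stmt_8 {𝕜 : Type*} [RCLike 𝕜] {d : ℕ} (Ω : Set (EuclideanSpace 𝕜 (Fin d)))
    (hΩopen : IsOpen Ω) (hΩconv : Convex ℝ Ω) (hΩbdd : Bornology.IsBounded Ω)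
    (h0 : (0 : EuclideanSpace 𝕜 (Fin d)) ∈ Ω)
    (w : EuclideanSpace 𝕜 (Fin d) → ℝ)
    (hw : ∀ x : EuclideanSpace 𝕜 (Fin d), ‖x‖ = 1 → 0 < w x ∧ w x • x ∈ frontier Ω)
    (a b : ℝ) (hab : a ≤ b) (σ : ℝ → EuclideanSpace 𝕜 (Fin d))
    (hσAC : ACOn σ a b) (hσS : ∀ t ∈ Set.Icc a b, ‖σ t‖ = 1) :
    ACOn (fun t => w (σ t) • σ t) a b ∧
      ∀ᵐ t ∂(volume.restrict (Set.Icc a b)),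
        ∀ ρ : ℝ, w (σ t) • σ t + ρ • deriv (fun u => w (σ u) • σ u) t ∉ Ω := by
  have hΩ0 : Ω ∈ 𝓝 0 := hΩopen.mem_nhds h0
  constructor
  · obtain ⟨K, hK⟩ := hΩconv.exists_lipschitzOnWith_inv_gauge_smul_sphere hΩ0 hΩbdd
    have hσS' : ∀ t ∈ uIcc a b, σ t ∈ sphere 0 1 := fun t ht =>
      mem_sphere_zero_iff_norm.2 (hσS t (uIcc_of_le hab ▸ ht))
    have hξ : ∀ t ∈ uIcc a b, w (σ t) • σ t = (gauge Ω (σ t))⁻¹ • σ t := fun t ht => by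
      obtain ⟨hpos, hfr⟩ := hw _ (mem_sphere_zero_iff_norm.1 (hσS' t ht))
      rw [← eq_inv_gauge_of_smul_mem_frontier hΩconv hΩ0 hpos.le hfr]
    refine AbsolutelyContinuousOnInterval.acOn <|
      (hσAC.absolutelyContinuousOnInterval hab).of_dist_le_mul (K := K) fun x hx y hy => ?_
    rw [hξ x hx, hξ y hy]
    exact hK.dist_le_mul _ (hσS' x hx) _ (hσS' y hy)
  · rw [← Measure.restrict_congr_set Ioo_ae_eq_Icc]
    filter_upwards [ae_restrict_mem measurableSet_Ioo] with t ht ρ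
    refine hΩconv.add_smul_deriv_notMem_of_eventually_mem_frontier hΩopen
      (ξ := fun u => w (σ u) • σ u) ?_ ρ
    filter_upwards [Ioo_mem_nhds ht.1 ht.2] with s hs
    exact (hw _ (hσS s (Ioo_subset_Icc_self hs))).2
end
end

section
/- Let 𝕂 be ℝ or ℂ, let Ω ⊂ 𝕂^d be a bounded convex domain, let p ∈ Ω, let n be a Euclidean unit vector and v₀ ∈ 𝕂^d a nonzero vector, and set δ₁ := δ_Ω(p;n), δ₂ := δ_Ω(p;v₀). Then for every s ∈ ℝ, the vector v = sn + v₀ satisfies δ_Ω(p;v) ≥ ‖v‖ / ( |s|/δ₁ + ‖v₀‖/δ₂ ). -/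
open Set Metric MeasureTheory
open scoped ENNReal

noncomputable section

variable (𝕜 : Type*) [RCLike 𝕜] {d : ℕ}

/-!
Since `Ω` is open and convex, it contains the `𝕜`-discs `p + c • nv` for `‖c‖ < δ₁` and
`p + c • v₀` for `‖c‖ * ‖v₀‖ < δ₂`, hence their convex hull. Writing `p + c • (s • nv + v₀)` as a
convex combination of a point of each disc shows that it lies in `Ω` as soon as
`‖c‖ * (|s| / δ₁ + ‖v₀‖ / δ₂) < 1`, so every boundary point on the line `p + 𝕜 v` is at distance
at least `‖v‖ / (|s| / δ₁ + ‖v₀‖ / δ₂)` from `p`.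
-/

section LineBoundaryDistance

variable {𝕜 : Type*} [RCLike 𝕜] {d : ℕ} {Ω : Set (EuclideanSpace 𝕜 (Fin d))}
  {p v : EuclideanSpace 𝕜 (Fin d)}

lemma lineBdryDist_le_norm_mul {c : 𝕜} (hc : p + c • v ∈ frontier Ω) :
    lineBdryDist 𝕜 Ω p v ≤ ‖c‖ * ‖v‖ := by
  have := infDist_le_dist_of_mem (x := p)
    (show p + c • v ∈ {q | ∃ c : 𝕜, q = p + c • v} ∩ frontier Ω from ⟨⟨c, rfl⟩, hc⟩)
  rwa [dist_self_add_right, norm_smul] at this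

lemma add_smul_mem_of_norm_mul_lt_lineBdryDist (hΩ : IsOpen Ω) (hp : p ∈ Ω) {c : 𝕜}
    (hc : ‖c‖ * ‖v‖ < lineBdryDist 𝕜 Ω p v) : p + c • v ∈ Ω := by
  have hf : Continuous fun t : 𝕜 => p + t • v := by fun_prop
  suffices closedBall (0 : 𝕜) ‖c‖ ⊆ (fun t : 𝕜 => p + t • v) ⁻¹' Ω by
    exact this (mem_closedBall_zero_iff.2 le_rfl)
  refine (convex_closedBall _ _).isPreconnected.subset_of_closure_inter_subset (hΩ.preimage hf)
    ⟨0, mem_closedBall_self (norm_nonneg c), by simpa using hp⟩ ?_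
  rintro t ⟨ht, htc⟩
  by_contra htΩ
  have hfr : p + t • v ∈ frontier Ω :=
    hf.frontier_preimage_subset Ω ⟨ht, fun h => htΩ ((hΩ.preimage hf).interior_eq ▸ h)⟩
  have hle := lineBdryDist_le_norm_mul hfr
  have := mem_closedBall_zero_iff.1 htc
  nlinarith [norm_nonneg v]

lemma nonempty_line_inter_frontier (hb : Bornology.IsBounded Ω) (hp : p ∈ Ω)
    (hv : v ≠ 0) : ({q | ∃ c : 𝕜, q = p + c • v} ∩ frontier Ω).Nonempty := by
  have hf : Continuous fun t : 𝕜 => p + t • v := by fun_prop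
  obtain ⟨R, hR⟩ := hb.subset_closedBall p
  obtain ⟨c, hc⟩ := NormedField.exists_lt_norm 𝕜 (R / ‖v‖)
  have hcΩ : p + c • v ∉ Ω := fun h => by
    have := hR h
    rw [mem_closedBall, dist_self_add_left, norm_smul, ← le_div_iff₀ (norm_pos_iff.2 hv)] at this
    linarith
  obtain ⟨t, ht⟩ : (frontier ((fun t : 𝕜 => p + t • v) ⁻¹' Ω)).Nonempty :=
    nonempty_frontier_iff.2 ⟨⟨0, by simpa using hp⟩, fun h => hcΩ (h.symm ▸ mem_univ c :)⟩
  exact ⟨_, ⟨t, rfl⟩, hf.frontier_preimage_subset Ω ht⟩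

lemma mul_norm_le_lineBdryDist (hΩ : IsOpen Ω) (hb : Bornology.IsBounded Ω) (hp : p ∈ Ω)
    {r : ℝ} (h : ∀ c : 𝕜, ‖c‖ < r → p + c • v ∈ Ω) : r * ‖v‖ ≤ lineBdryDist 𝕜 Ω p v := by
  rcases eq_or_ne v 0 with rfl | hv
  · rw [norm_zero, mul_zero]
    exact infDist_nonneg
  refine (le_infDist (nonempty_line_inter_frontier hb hp hv)).2 ?_
  rintro _ ⟨⟨c, rfl⟩, hc⟩
  have hcr : r ≤ ‖c‖ := not_lt.1 fun hcr => hΩ.inter_frontier_eq.subset ⟨h c hcr, hc⟩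
  simpa [norm_smul] using mul_le_mul_of_nonneg_right hcr (norm_nonneg v)

lemma lineBdryDist_pos (hΩ : IsOpen Ω) (hb : Bornology.IsBounded Ω) (hp : p ∈ Ω) (hv : v ≠ 0) :
    0 < lineBdryDist 𝕜 Ω p v := by
  obtain ⟨ε, hε, hball⟩ := Metric.isOpen_iff.1 hΩ p hp
  have hv' : 0 < ‖v‖ := norm_pos_iff.2 hv
  refine lt_of_lt_of_le (by positivity) (mul_norm_le_lineBdryDist hΩ hb hp (r := ε / ‖v‖) ?_)
  intro c hc
  apply hball
  rwa [mem_ball, dist_self_add_left, norm_smul, ← lt_div_iff₀ hv']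

end LineBoundaryDistance

lemma Convex.add_smul_add_smul_mem {𝕜 E : Type*} [RCLike 𝕜] [AddCommGroup E] [Module 𝕜 E]
    [Module ℝ E] [IsScalarTower ℝ 𝕜 E] {Ω : Set E} (hΩ : Convex ℝ Ω) {p u w : E} {r₁ r₂ : ℝ}
    (hr₁ : 0 < r₁) (hr₂ : 0 < r₂) (hu : ∀ c : 𝕜, ‖c‖ < r₁ → p + c • u ∈ Ω)
    (hw : ∀ c : 𝕜, ‖c‖ < r₂ → p + c • w ∈ Ω) {c₁ c₂ : 𝕜} (hc : ‖c₁‖ / r₁ + ‖c₂‖ / r₂ < 1) :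
    p + (c₁ • u + c₂ • w) ∈ Ω := by
  set ε := 1 - (‖c₁‖ / r₁ + ‖c₂‖ / r₂)
  have hε : 0 < ε := sub_pos.2 hc
  -- `p + (c₁ • u + c₂ • w) = a • (p + (c₁ / a) • u) + b • (p + (c₂ / b) • w)`, with the weights
  -- `a, b` chosen just above `‖c₁‖ / r₁, ‖c₂‖ / r₂` so that both points stay in their discs
  set a := ‖c₁‖ / r₁ + ε / 2
  set b := ‖c₂‖ / r₂ + ε / 2
  have ha : 0 < a := by positivity
  have hb : 0 < b := by positivity
  have hscaled : ∀ (c : 𝕜) (r : ℝ), 0 < r → ‖c / ((‖c‖ / r + ε / 2 : ℝ) : 𝕜)‖ < r := by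
    intro c r hr
    have hpos : 0 < ‖c‖ / r + ε / 2 := by positivity
    rw [norm_div, RCLike.norm_ofReal, abs_of_pos hpos, div_lt_iff₀ hpos, mul_add,
      mul_div_cancel₀ _ hr.ne']
    linarith [mul_pos hr (half_pos hε)]
  have hx : p + (c₁ / a) • u ∈ Ω := hu _ (hscaled c₁ r₁ hr₁)
  have hy : p + (c₂ / b) • w ∈ Ω := hw _ (hscaled c₂ r₂ hr₂)
  have hab : a + b = 1 := by simp only [a, b, ε]; ring
  convert hΩ hx hy ha.le hb.le hab using 1
  simp only [smul_add, RCLike.real_smul_eq_coe_smul (K := 𝕜) a,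
    RCLike.real_smul_eq_coe_smul (K := 𝕜) b, smul_smul]
  rw [mul_div_cancel₀ _ (RCLike.ofReal_ne_zero.2 ha.ne'),
    mul_div_cancel₀ _ (RCLike.ofReal_ne_zero.2 hb.ne'), add_add_add_comm, ← add_smul,
    ← RCLike.ofReal_add, hab, RCLike.ofReal_one, one_smul]

theorem stmt_10_general {𝕜 : Type*} [RCLike 𝕜] {d : ℕ} (Ω : Set (EuclideanSpace 𝕜 (Fin d)))
    (hΩopen : IsOpen Ω) (hΩconv : Convex ℝ Ω)
    (hΩbdd : Bornology.IsBounded Ω) (p : EuclideanSpace 𝕜 (Fin d)) (hp : p ∈ Ω)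
    (nv v₀ : EuclideanSpace 𝕜 (Fin d)) (hnv : ‖nv‖ = 1) (hv₀ : v₀ ≠ 0) :
    ∀ s : ℝ,
      ‖s • nv + v₀‖ / (|s| / lineBdryDist 𝕜 Ω p nv + ‖v₀‖ / lineBdryDist 𝕜 Ω p v₀) ≤
        lineBdryDist 𝕜 Ω p (s • nv + v₀) := by
  intro s
  have hδ₁ := lineBdryDist_pos hΩopen hΩbdd hp (norm_ne_zero_iff.1 (hnv ▸ one_ne_zero))
  have hδ₂ := lineBdryDist_pos hΩopen hΩbdd hp hv₀
  have hv₀' : 0 < ‖v₀‖ := norm_pos_iff.2 hv₀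
  set S := |s| / lineBdryDist 𝕜 Ω p nv + ‖v₀‖ / lineBdryDist 𝕜 Ω p v₀
  have hS : 0 < S := by positivity
  rw [div_eq_inv_mul]
  refine mul_norm_le_lineBdryDist hΩopen hΩbdd hp fun c hc => ?_
  have hcS : ‖c * s‖ / lineBdryDist 𝕜 Ω p nv + ‖c‖ / (lineBdryDist 𝕜 Ω p v₀ / ‖v₀‖) < 1 :=
    calc _ = ‖c‖ * S := by
          simp only [S, norm_mul, RCLike.norm_ofReal]
          field_simp
      _ < S⁻¹ * S := mul_lt_mul_of_pos_right hc hS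
      _ = 1 := inv_mul_cancel₀ hS.ne'
  have hmem := hΩconv.add_smul_add_smul_mem hδ₁ (div_pos hδ₂ hv₀')
    (fun c hc => add_smul_mem_of_norm_mul_lt_lineBdryDist hΩopen hp (by rwa [hnv, mul_one]))
    (fun c hc => add_smul_mem_of_norm_mul_lt_lineBdryDist hΩopen hp (by rwa [← lt_div_iff₀ hv₀']))
    hcS
  rwa [smul_add, RCLike.real_smul_eq_coe_smul (K := 𝕜) s, smul_smul]

/-- lower bound for the distance to the boundary in the direction
`v = s n + v₀`. -/
theorem stmt_10 {𝕜 : Type*} [RCLike 𝕜] {d : ℕ} (Ω : Set (EuclideanSpace 𝕜 (Fin d)))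
    (hΩopen : IsOpen Ω) (hΩne : Ω.Nonempty) (hΩconv : Convex ℝ Ω)
    (hΩbdd : Bornology.IsBounded Ω) (p : EuclideanSpace 𝕜 (Fin d)) (hp : p ∈ Ω)
    (nv v₀ : EuclideanSpace 𝕜 (Fin d)) (hnv : ‖nv‖ = 1) (hv₀ : v₀ ≠ 0) :
    ∀ s : ℝ,
      ‖s • nv + v₀‖ / (|s| / lineBdryDist 𝕜 Ω p nv + ‖v₀‖ / lineBdryDist 𝕜 Ω p v₀) ≤
        lineBdryDist 𝕜 Ω p (s • nv + v₀) :=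
  stmt_10_general Ω hΩopen hΩconv hΩbdd p hp nv v₀ hnv hv₀
end
end

section
/- Let 𝕂 be ℝ or ℂ and k ≥ 1. There exists ε = ε(k) ∈ (0,1) such that: if u₁,…,u_k ∈ 𝕂^d are Euclidean unit vectors with |⟨u_j, u_l⟩| ≤ ε for all 1 ≤ j < l ≤ k, then u₁,…,u_k are 𝕂-linearly independent and the set B(0,ε) ∩ Span_𝕂{u₁,…,u_k} is contained in the convex hull of (𝕂∩𝔻)u₁ ∪ ⋯ ∪ (𝕂∩𝔻)u_k, where B(0,ε) is the Euclidean ball of radius ε in 𝕂^d and 𝔻 is the open unit disc in ℂ (so 𝕂∩𝔻 = (−1,1) when 𝕂 = ℝ). -/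
open Set Metric MeasureTheory
open scoped ENNReal

noncomputable section

variable (𝕜 : Type*) [RCLike 𝕜] {d : ℕ}

/-!
Pairing `x = ∑ c_l u_l` with `u_j` gives `‖c_j‖ ≤ ‖x‖ + ε ∑_{l ≠ j} ‖c_l‖`, and summing over `j`,
`(1 - kε) ∑ ‖c_j‖ ≤ k ‖x‖`. So `x = 0` forces `c = 0`, and for `ε = 1/(k+1)²` and `‖x‖ < ε` every
`k ‖c_j‖ < 1`; then `x = ∑ k⁻¹ • ((k c_j) • u_j)` is a convex combination of points of the discs.
-/

section AlmostOrthonormal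

variable {𝕜}

lemma sum_smul_mem_convexHull_iUnion_smul_unitBall {E ι : Type*} [AddCommGroup E] [Module 𝕜 E]
    [Module ℝ E] [IsScalarTower ℝ 𝕜 E] [Fintype ι] [Nonempty ι] (u : ι → E) {c : ι → 𝕜}
    (hc : ∀ j, Fintype.card ι * ‖c j‖ < 1) :
    ∑ j, c j • u j ∈ convexHull ℝ (⋃ j, {w | ∃ a : 𝕜, ‖a‖ < 1 ∧ w = a • u j}) := by
  set n : ℝ := (Fintype.card ι : ℝ)
  have hn : n ≠ 0 := Nat.cast_ne_zero.mpr Fintype.card_ne_zero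
  have hsplit : ∀ j, c j • u j = n⁻¹ • (((n : 𝕜) * c j) • u j) := fun j => by
    rw [← smul_assoc, RCLike.real_smul_eq_coe_mul, ← mul_assoc, ← RCLike.ofReal_mul,
      inv_mul_cancel₀ hn, RCLike.ofReal_one, one_mul]
  rw [Finset.sum_congr rfl fun j _ => hsplit j]
  refine (convex_convexHull ℝ _).sum_mem (fun _ _ => by positivity) ?_ fun j _ =>
    subset_convexHull ℝ _ (mem_iUnion.mpr ⟨j, (n : 𝕜) * c j, ?_, rfl⟩)
  · rw [Finset.sum_const, Finset.card_univ, nsmul_eq_mul, mul_inv_cancel₀ hn]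
  · rw [norm_mul, RCLike.norm_ofReal, abs_of_nonneg (Nat.cast_nonneg _)]
    exact hc j

variable {E ι : Type*} [NormedAddCommGroup E] [InnerProductSpace 𝕜 E] [Fintype ι]
  {u : ι → E} {ε : ℝ}

open Finset

lemma norm_coeff_le_of_pairwise_inner_le [DecidableEq ι] (hu : ∀ j, ‖u j‖ = 1)
    (ho : Pairwise fun j l => ‖(inner 𝕜 (u j) (u l) : 𝕜)‖ ≤ ε) (c : ι → 𝕜) (j : ι) :
    ‖c j‖ ≤ ‖∑ l, c l • u l‖ + ε * ∑ l ∈ univ.erase j, ‖c l‖ := by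
  have hpair : (inner 𝕜 (u j) (∑ l, c l • u l) : 𝕜) =
      c j + ∑ l ∈ univ.erase j, c l * inner 𝕜 (u j) (u l) := by
    rw [inner_sum, ← add_sum_erase _ _ (mem_univ j), inner_smul_right,
      inner_self_eq_norm_sq_to_K, hu j]
    simp only [inner_smul_right, RCLike.ofReal_one, one_pow, mul_one]
  have hcross : ‖∑ l ∈ univ.erase j, c l * inner 𝕜 (u j) (u l)‖ ≤
      ε * ∑ l ∈ univ.erase j, ‖c l‖ := by
    rw [mul_sum]
    refine (norm_sum_le _ _).trans (sum_le_sum fun l hl => ?_)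
    rw [norm_mul, mul_comm]
    gcongr
    exact ho (ne_of_mem_erase hl).symm
  calc ‖c j‖
      = ‖(inner 𝕜 (u j) (∑ l, c l • u l) : 𝕜) - ∑ l ∈ univ.erase j, c l * inner 𝕜 (u j) (u l)‖ := by
        rw [hpair, add_sub_cancel_right]
    _ ≤ ‖u j‖ * ‖∑ l, c l • u l‖ + ε * ∑ l ∈ univ.erase j, ‖c l‖ :=
        (norm_sub_le _ _).trans (add_le_add (norm_inner_le_norm _ _) hcross)
    _ = ‖∑ l, c l • u l‖ + ε * ∑ l ∈ univ.erase j, ‖c l‖ := by rw [hu j, one_mul]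

lemma one_sub_mul_sum_norm_le (hε : 0 ≤ ε) (hu : ∀ j, ‖u j‖ = 1)
    (ho : Pairwise fun j l => ‖(inner 𝕜 (u j) (u l) : 𝕜)‖ ≤ ε) (c : ι → 𝕜) :
    (1 - Fintype.card ι * ε) * ∑ j, ‖c j‖ ≤ Fintype.card ι * ‖∑ j, c j • u j‖ := by
  classical
  have hcoeff : ∀ j, ‖c j‖ ≤ ‖∑ l, c l • u l‖ + ε * ∑ l, ‖c l‖ := fun j =>
    (norm_coeff_le_of_pairwise_inner_le hu ho c j).trans <| by
      gcongr
      exact erase_subset _ _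
  have := sum_le_sum fun j (_ : j ∈ (univ : Finset ι)) => hcoeff j
  rw [sum_const, card_univ, nsmul_eq_mul] at this
  linarith

lemma linearIndependent_of_pairwise_inner_le (hε : 0 ≤ ε) (hεn : Fintype.card ι * ε < 1)
    (hu : ∀ j, ‖u j‖ = 1) (ho : Pairwise fun j l => ‖(inner 𝕜 (u j) (u l) : 𝕜)‖ ≤ ε) :
    LinearIndependent 𝕜 u := by
  rw [Fintype.linearIndependent_iff]
  intro c hc j
  have hsum := one_sub_mul_sum_norm_le hε hu ho c
  rw [hc, norm_zero, mul_zero] at hsum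
  have hsum0 : ∑ l, ‖c l‖ = 0 :=
    le_antisymm (nonpos_of_mul_nonpos_right hsum (by linarith))
      (sum_nonneg fun _ _ => norm_nonneg _)
  exact norm_eq_zero.mp <| (sum_eq_zero_iff_of_nonneg fun _ _ => norm_nonneg _).mp hsum0 j
    (mem_univ j)

lemma card_mul_norm_coeff_lt_one
    (hεn : Fintype.card ι * ε + Fintype.card ι ^ 2 * ε ≤ 1)
    (hu : ∀ j, ‖u j‖ = 1) (ho : Pairwise fun j l => ‖(inner 𝕜 (u j) (u l) : 𝕜)‖ ≤ ε)
    {c : ι → 𝕜} (hx : ‖∑ j, c j • u j‖ < ε) (j : ι) :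
    Fintype.card ι * ‖c j‖ < 1 := by
  set n : ℝ := (Fintype.card ι : ℝ)
  have hn : 0 < n := Nat.cast_pos.mpr <| Fintype.card_pos_iff.mpr ⟨j⟩
  set S := ∑ l, ‖c l‖
  have hcS : ‖c j‖ ≤ S := single_le_sum (fun _ _ => norm_nonneg _) (mem_univ j)
  have hε : 0 < ε := (norm_nonneg _).trans_lt hx
  have hsum := one_sub_mul_sum_norm_le hε.le hu ho c
  have hpos : 0 < 1 - n * ε := by nlinarith
  have : (1 - n * ε) * (n * S) < 1 - n * ε := by
    calc (1 - n * ε) * (n * S) = n * ((1 - n * ε) * S) := by ring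
      _ ≤ n * (n * ‖∑ j, c j • u j‖) := by gcongr
      _ < n * (n * ε) := by gcongr
      _ ≤ 1 - n * ε := by linarith
  calc n * ‖c j‖ ≤ n * S := by gcongr
    _ < 1 := lt_of_mul_lt_mul_left (by rwa [mul_one]) hpos.le

end AlmostOrthonormal

/-- Observation 5.2: almost orthogonal unit vectors are linearly independent
and their span contains a definite ball inside the convex hull of the corresponding discs. -/
theorem stmt_12 (𝕜 : Type*) [RCLike 𝕜] (k : ℕ) (hk : 1 ≤ k) :
    ∃ ε : ℝ, ε ∈ Set.Ioo (0 : ℝ) 1 ∧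
      ∀ (d : ℕ) (u : Fin k → EuclideanSpace 𝕜 (Fin d)),
        (∀ j, ‖u j‖ = 1) →
        (∀ j l : Fin k, j < l → ‖(inner 𝕜 (u j) (u l) : 𝕜)‖ ≤ ε) →
        LinearIndependent 𝕜 u ∧
          Metric.ball (0 : EuclideanSpace 𝕜 (Fin d)) ε ∩
              (Submodule.span 𝕜 (Set.range u) : Set (EuclideanSpace 𝕜 (Fin d))) ⊆
            convexHull ℝ (⋃ j : Fin k, {w | ∃ c : 𝕜, ‖c‖ < 1 ∧ w = c • u j}) := by
  have hk' : (1 : ℝ) ≤ k := Nat.one_le_cast.mpr hk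
  set ε : ℝ := 1 / (k + 1) ^ 2
  have hε₀ : 0 < ε := by positivity
  have hεk : (k : ℝ) * ε + (k : ℝ) ^ 2 * ε ≤ 1 := by
    rw [← add_mul, ← div_eq_mul_one_div, div_le_one (by positivity)]
    nlinarith
  refine ⟨ε, ⟨hε₀, ?_⟩, fun d u hu hlt => ?_⟩
  · rw [div_lt_one (by positivity)]
    nlinarith
  have ho : Pairwise fun j l => ‖(inner 𝕜 (u j) (u l) : 𝕜)‖ ≤ ε := fun j l hjl =>
    hjl.lt_or_gt.elim (hlt j l) fun hlj => (norm_inner_symm _ _).trans_le (hlt l j hlj)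
  have hεk' : (k : ℝ) * ε < 1 := (lt_add_of_pos_right _ (by positivity)).trans_le hεk
  refine ⟨linearIndependent_of_pairwise_inner_le hε₀.le (by rwa [Fintype.card_fin]) hu ho, ?_⟩
  rintro x ⟨hx, hspan⟩
  obtain ⟨c, rfl⟩ := (Submodule.mem_span_range_iff_exists_fun 𝕜).mp hspan
  have : Nonempty (Fin k) := ⟨⟨0, hk⟩⟩
  exact sum_smul_mem_convexHull_iUnion_smul_unitBall u fun j =>
    card_mul_norm_coeff_lt_one (by rwa [Fintype.card_fin]) hu ho (mem_ball_zero_iff.mp hx) j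
end
end
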